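/- Let 𝒜 = Σ_{n≥0} a_n X^n ∈ ℚ[[X]] be the generating formal power series of the Apéry numbers a_n = Σ_{k=0}^n (n choose k)²((n+k) choose k)². Then, with ' denoting the formal derivative of formal power series, X²(1 − 34X + X²)·𝒜''' + X(3 − 153X + 6X²)·𝒜'' + (1 − 112X + 7X²)·𝒜' + (X − 5)·𝒜 = 0 in ℚ[[X]]. -/

import Mathlib

open PowerSeries

/-- The Apéry numbers `aₙ = Σ_{k=0}^n (n choose k)² ((n+k) choose k)²`. -/
def apery (n : ℕ) : ℚ :=
  ∑ k ∈ Finset.range (n + 1), ((n.choose k : ℚ)) ^ 2 * (((n + k).choose k : ℚ)) ^ 2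

/-- The generating series `𝒜 = Σ aₙ Xⁿ` of the Apéry numbers. -/
noncomputable def aperyGF : PowerSeries ℚ := PowerSeries.mk apery

/-!
Comparing coefficients of `X^(n+1)`, the differential equation is Apéry's recurrence
`(n+2)³ a_{n+2} = (2n+3)(17n²+51n+39) a_{n+1} − (n+1)³ a_n` (at `X⁰` it says `a₁ = 5 a₀`).
The recurrence is proved by creative telescoping. Put `c(n,k) = C(n,k) C(n+k,k)`, so that
`aₙ = Σₖ c(n,k)²`. Applied termwise to `c(·,k)²`, the recurrence operator gives
`B(n+1,k) − B(n+1,k−1)` for Apéry's certificate `B(n,k) = 4(2n+1)(k(2k+1) − (2n+1)²) c(n,k)²`,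
so summing over `k` telescopes to zero.
-/

open Finset

section Choose

variable {R : Type*}

theorem cast_succ_choose_mul_sub [CommRing R] (n k : ℕ) :
    ((n + 1).choose k : R) * (n + 1 - k) = n.choose k * (n + 1) := by
  rcases le_or_gt k (n + 1) with hk | hk
  · have h := congrArg (Nat.cast (R := R)) (Nat.choose_mul_succ_eq n k)
    push_cast [hk] at h
    exact h.symm
  · simp [Nat.choose_eq_zero_of_lt hk, Nat.choose_eq_zero_of_lt (Nat.lt_of_succ_lt hk)]

theorem cast_add_succ_choose_mul [CommSemiring R] (n k : ℕ) :
    ((n + k + 1).choose k : R) * (n + 1) = (n + k).choose k * (n + k + 1) := by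
  have h := congrArg (Nat.cast (R := R)) (Nat.choose_mul_succ_eq (n + k) k)
  rw [show n + k + 1 - k = n + 1 by omega] at h
  push_cast at h
  exact h.symm

end Choose

def aperyBinom (n k : ℕ) : ℚ := n.choose k * (n + k).choose k

theorem aperyBinom_eq_zero {n k : ℕ} (h : n < k) : aperyBinom n k = 0 := by
  simp [aperyBinom, Nat.choose_eq_zero_of_lt h]

theorem apery_eq_sum_range {n N : ℕ} (h : n < N) :
    apery n = ∑ k ∈ range N, aperyBinom n k ^ 2 := by
  have hsub : range (n + 1) ⊆ range N := range_subset_range.mpr h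
  rw [apery, ← sum_subset hsub fun k _ hk => by
    rw [aperyBinom_eq_zero (by simpa using hk), zero_pow two_ne_zero]]
  simp [aperyBinom, mul_pow]

theorem aperyBinom_succ_mul (n k : ℕ) :
    aperyBinom (n + 1) k * (n + 1 - k) = aperyBinom n k * (n + k + 1) := by
  have hlow : ((n + 1).choose k : ℚ) * (n + 1 - k) = n.choose k * (n + 1) :=
    cast_succ_choose_mul_sub n k
  have hup : ((n + k + 1).choose k : ℚ) * (n + 1) = (n + k).choose k * (n + k + 1) :=
    cast_add_succ_choose_mul n k
  apply mul_right_cancel₀ (by positivity : (n + 1 : ℚ) ≠ 0)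
  simp only [aperyBinom, show n + 1 + k = n + k + 1 by ring]
  linear_combination ((n + k + 1).choose k : ℚ) * (n + 1) * hlow + (n.choose k : ℚ) * (n + 1) * hup

theorem aperyBinom_succ_succ_mul (n k : ℕ) :
    aperyBinom (n + 1) (k + 1) * (k + 1) ^ 2 = aperyBinom n k * (n + k + 1) * (n + k + 2) := by
  have hlow : ((n + 1) * n.choose k : ℚ) = (n + 1).choose (k + 1) * (k + 1) := by
    exact_mod_cast Nat.add_one_mul_choose_eq n k
  have hup : ((n + k + 2) * (n + k + 1).choose k : ℚ) = (n + k + 2).choose (k + 1) * (k + 1) := by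
    exact_mod_cast Nat.add_one_mul_choose_eq (n + k + 1) k
  have hmid : ((n + k + 1).choose k : ℚ) * (n + 1) = (n + k).choose k * (n + k + 1) :=
    cast_add_succ_choose_mul n k
  simp only [aperyBinom, show n + 1 + (k + 1) = n + k + 2 by ring]
  linear_combination (-(((n + k + 2).choose (k + 1) : ℚ) * (k + 1))) * hlow
    - (n + 1) * (n.choose k : ℚ) * hup + (n.choose k : ℚ) * (n + k + 2) * hmid

/-- `aperyCert n (k + 1)` is Apéry's `B(n,k)`; the shift makes `aperyCert n 0 = 0` play the role
of `B(n,-1)`. -/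
def aperyCert (n : ℕ) : ℕ → ℚ
  | 0 => 0
  | k + 1 => 4 * (2 * n + 1) * (k * (2 * k + 1) - (2 * n + 1) ^ 2) * aperyBinom n k ^ 2

theorem aperyCert_succ_sub (n k : ℕ) :
    (n + 2) ^ 3 * aperyBinom (n + 2) k ^ 2
        - (2 * n + 3) * (17 * n ^ 2 + 51 * n + 39) * aperyBinom (n + 1) k ^ 2
        + (n + 1) ^ 3 * aperyBinom n k ^ 2
      = aperyCert (n + 1) (k + 1) - aperyCert (n + 1) k := by
  -- Expressed through `aperyBinom (n + 2) k`, every term has a positive denominator,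
  -- so no case split on `k ≤ n` is needed.
  have h1 : aperyBinom (n + 1) k = aperyBinom (n + 2) k * (n + 2 - k) / (n + k + 2) := by
    rw [eq_div_iff (by positivity)]
    have h := aperyBinom_succ_mul (n + 1) k
    simp only [add_assoc, Nat.reduceAdd, Nat.cast_add, Nat.cast_one] at h
    linear_combination -h
  have h0 : aperyBinom n k = aperyBinom (n + 1) k * (n + 1 - k) / (n + k + 1) := by
    rw [eq_div_iff (by positivity)]
    linear_combination -aperyBinom_succ_mul n k
  rcases k with _ | k
  · simp only [aperyCert]
    rw [h0, h1]
    push_cast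
    field_simp
    ring
  · have h2 : aperyBinom (n + 1) k
        = aperyBinom (n + 2) (k + 1) * (k + 1) ^ 2 / ((n + k + 2) * (n + k + 3)) := by
      rw [eq_div_iff (by positivity)]
      have h := aperyBinom_succ_succ_mul (n + 1) k
      simp only [add_assoc, Nat.reduceAdd, Nat.cast_add, Nat.cast_one] at h
      linear_combination -h
    simp only [aperyCert]
    rw [h0, h1, h2]
    push_cast
    field_simp
    ring

theorem apery_succ_succ (n : ℕ) :
    (n + 2) ^ 3 * apery (n + 2)
      = (2 * n + 3) * (17 * n ^ 2 + 51 * n + 39) * apery (n + 1) - (n + 1) ^ 3 * apery n := by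
  have htel : ∑ k ∈ range (n + 3), ((n + 2) ^ 3 * aperyBinom (n + 2) k ^ 2
      - (2 * n + 3) * (17 * n ^ 2 + 51 * n + 39) * aperyBinom (n + 1) k ^ 2
      + (n + 1) ^ 3 * aperyBinom n k ^ 2) = 0 := by
    rw [sum_congr rfl fun k _ => aperyCert_succ_sub n k, sum_range_sub]
    simp [aperyCert, aperyBinom_eq_zero (Nat.lt_succ_self (n + 1))]
  rw [sum_add_distrib, sum_sub_distrib, ← mul_sum, ← mul_sum, ← mul_sum,
    ← apery_eq_sum_range (by omega), ← apery_eq_sum_range (by omega),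
    ← apery_eq_sum_range (by omega)] at htel
  linear_combination htel

section Operator

variable {R : Type*} [CommRing R]

noncomputable def aperyOperator (f : R⟦X⟧) : R⟦X⟧ :=
  X ^ 2 * (1 - 34 * X + X ^ 2) * (d⁄dX R (d⁄dX R (d⁄dX R f)))
    + X * (3 - 153 * X + 6 * X ^ 2) * (d⁄dX R (d⁄dX R f))
    + (1 - 112 * X + 7 * X ^ 2) * (d⁄dX R f)
    + (X - 5) * f

theorem coeff_zero_aperyOperator (f : R⟦X⟧) :
    coeff 0 (aperyOperator f) = coeff 1 f - 5 * coeff 0 f := by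
  simp only [aperyOperator, coeff_zero_eq_constantCoeff, map_add, map_sub, map_mul, map_pow,
    map_one, map_ofNat, constantCoeff_X, zero_pow two_ne_zero, zero_mul, mul_zero, zero_add,
    zero_sub]
  rw [← coeff_zero_eq_constantCoeff_apply (d⁄dX R f), coeff_derivative]
  ring

theorem coeff_succ_aperyOperator (f : R⟦X⟧) (n : ℕ) :
    coeff (n + 1) (aperyOperator f)
      = (n + 2) ^ 3 * coeff (n + 2) f
        - (2 * n + 3) * (17 * n ^ 2 + 51 * n + 39) * coeff (n + 1) f
        + (n + 1) ^ 3 * coeff n f := by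
  rcases n with _ | _ | _ | n <;>
  simp [aperyOperator, ← map_ofNat C, mul_add, add_mul, mul_sub, sub_mul, mul_assoc,
    mul_left_comm _ X, coeff_X_pow_mul', coeff_derivative] <;> ring_nf

end Operator

/-- The generating series of the Apéry numbers is annihilated by the Apéry differential
operator: `X²(1−34X+X²)·𝒜''' + X(3−153X+6X²)·𝒜'' + (1−112X+7X²)·𝒜' + (X−5)·𝒜 = 0`. -/
theorem apery_ode :
    X ^ 2 * (1 - 34 * X + X ^ 2) * (d⁄dX ℚ (d⁄dX ℚ (d⁄dX ℚ aperyGF)))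
      + X * (3 - 153 * X + 6 * X ^ 2) * (d⁄dX ℚ (d⁄dX ℚ aperyGF))
      + (1 - 112 * X + 7 * X ^ 2) * (d⁄dX ℚ aperyGF)
      + (X - 5) * aperyGF = 0 := by
  change aperyOperator aperyGF = 0
  ext (_ | n)
  · rw [coeff_zero_aperyOperator]
    norm_num [aperyGF, apery, sum_range_succ]
  · rw [coeff_succ_aperyOperator]
    simp only [aperyGF, coeff_mk, map_zero]
    linear_combination apery_succ_succ n
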